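/- arXiv:2501.06155 — 2 statements merged into one kernel-verified Lean document; each statement's English description precedes it below -/
import Mathlib

section
/- If the reconstruction operator R satisfies R(F,…,F) = F for all constant arguments F, and the sequence {U*_j} satisfies the one-step relations F(U*_{j+1}) − F(U*_j) = I_j(U*) for all j, then the global flux values F_j := F(U*_j) − R_j (with R₀ = 0 and R_{j+1} = R_j + I_j(U*)) are all equal, and the reconstructed interface fluxes satisfy R-hat_{i+1/2} − R-hat_{i−1/2} = 0 for each interior i; hence {U*_j} is a discrete stationary solution of the semi-discrete scheme. -/
/-- If the reconstruction reproduces constants and `{U*_j}` satisfies the one-step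
relations `F(U*_{j+1}) - F(U*_j) = I_j`, then the global flux values
`G_j = F(U*_j) - R_j` are all equal and all reconstructed interface flux differences
vanish: `{U*_j}` is a discrete stationary solution. -/
theorem stmt6 (n r s : ℕ) (Δx : ℝ) (hΔx : 0 < Δx)
    (F : (Fin n → ℝ) → (Fin n → ℝ)) (Ustar : ℕ → (Fin n → ℝ))
    (I : ℕ → (Fin n → ℝ))
    (Rop : (Fin (r + s + 1) → (Fin n → ℝ)) → (Fin n → ℝ))
    (hconst : ∀ v : Fin n → ℝ, Rop (fun _ => v) = v)
    (hstep : ∀ j, F (Ustar (j + 1)) - F (Ustar j) = I j)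
    (R : ℕ → (Fin n → ℝ)) (hR0 : R 0 = 0) (hRrec : ∀ j, R (j + 1) = R j + I j)
    (G : ℕ → (Fin n → ℝ)) (hG : ∀ j, G j = F (Ustar j) - R j) :
    (∀ j j', G j = G j') ∧
    ∀ i, r + 1 ≤ i →
      (Δx)⁻¹ • (Rop (fun m : Fin (r + s + 1) => G (i - r + m.val))
        - Rop (fun m : Fin (r + s + 1) => G (i - 1 - r + m.val))) = 0 := by
  have key : ∀ j, G j = G 0 := by
    intro j
    induction j with
    | zero => rfl
    | succ k ih =>
      rw [hG (k+1), hRrec k, ← hstep k, ← ih, hG k]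
      abel
  refine ⟨fun j j' => (key j).trans (key j').symm, fun i hi => ?_⟩
  have h1 : (fun m : Fin (r + s + 1) => G (i - r + m.val)) = fun _ => G 0 := by
    funext m; exact key _
  have h2 : (fun m : Fin (r + s + 1) => G (i - 1 - r + m.val)) = fun _ => G 0 := by
    funext m; exact key _
  rw [h1, h2, hconst, sub_self, smul_zero]
end

section
/- For the shallow water system, consider states (h_i, q̄), (h_{i+1}, q̄) with h_i, h_{i+1} > 0, h_i ≠ h_{i+1}, and define H_i, H_{i+1} by the admissible jump relation g(H_{i+1} − H_i) = g(h_{i+1} − h_i) + (q̄²/2)(1/h_{i+1}² − 1/h_i²). If g − q̄² h̄/(h_i h_{i+1})² ≠ 0 where h̄ = (h_i + h_{i+1})/2, then h̃ := (g h̄ − q̄²/(h_i h_{i+1})) / (g − q̄² h̄/(h_i h_{i+1})²) satisfies the momentum-flux jump identity [q̄²/h + g h²/2]_{i}^{i+1} = g h̃ (H_{i+1} − H_i). -/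
/-- Shallow water source linearization across an admissible jump: with `H` defined by
the jump relation, `h̃ = (g h̄ - q̄²/(h_i h_{i+1})) / (g - q̄² h̄/(h_i h_{i+1})²)`
satisfies `[q̄²/h + g h²/2] = g h̃ [H]`. -/
theorem stmt15 (g qbar h₁ h₂ H₁ H₂ : ℝ) (hg : 0 < g)
    (hh₁ : 0 < h₁) (hh₂ : 0 < h₂) (hne : h₁ ≠ h₂)
    (hjump : g * (H₂ - H₁) = g * (h₂ - h₁) + (qbar ^ 2 / 2) * (1 / h₂ ^ 2 - 1 / h₁ ^ 2))
    (hden : g - qbar ^ 2 * ((h₁ + h₂) / 2) / (h₁ * h₂) ^ 2 ≠ 0) :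
    (qbar ^ 2 / h₂ + g * h₂ ^ 2 / 2) - (qbar ^ 2 / h₁ + g * h₁ ^ 2 / 2)
      = g * ((g * ((h₁ + h₂) / 2) - qbar ^ 2 / (h₁ * h₂))
          / (g - qbar ^ 2 * ((h₁ + h₂) / 2) / (h₁ * h₂) ^ 2)) * (H₂ - H₁) := by
  have h1 : h₁ ≠ 0 := ne_of_gt hh₁
  have h2 : h₂ ≠ 0 := ne_of_gt hh₂
  have : g * ((g * ((h₁ + h₂) / 2) - qbar ^ 2 / (h₁ * h₂))
          / (g - qbar ^ 2 * ((h₁ + h₂) / 2) / (h₁ * h₂) ^ 2)) * (H₂ - H₁)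
      = ((g * ((h₁ + h₂) / 2) - qbar ^ 2 / (h₁ * h₂))
          / (g - qbar ^ 2 * ((h₁ + h₂) / 2) / (h₁ * h₂) ^ 2)) * (g * (H₂ - H₁)) := by
    ring
  rw [this, hjump, div_mul_eq_mul_div, eq_div_iff hden]
  field_simp
  ring
end
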